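/- Let h ∈ ℝ, h ≠ 0, and for each n ∈ ℤ let w_n : ℝ² → ℝ be a smooth function of (x, y); set v_n = w_{n,x}, u_n = v_{n,x}, p_n = u_{n,x}, q_n = p_{n,x}. Assume for all n: u_{n+1} + u_n = (2/h)(v_{n+1} − v_n) − (1/2)(v_{n+1} − v_n)² and 4 v_{n,y} + q_n + 3 u_n² = 0 (identically in x and y). Then for all n the quantity Φ_n := 4(w_{n+1,y} − w_{n,y}) + (p_{n+1} − p_n) + (3/h)(v_{n+1} − v_n)² − (1/2)(v_{n+1} − v_n)³ satisfies ∂_x Φ_n = 0; that is, Φ_n is independent of x. -/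

import Mathlib

noncomputable section

/-- Partial derivative in the first variable `x` of a function on `ℝ² = ℝ × ℝ`. -/
def pX (f : ℝ × ℝ → ℝ) : ℝ × ℝ → ℝ :=
  fun p => deriv (fun x => f (x, p.2)) p.1

/-- Partial derivative in the second variable `y` (playing the role of `t₃`). -/
def pY (f : ℝ × ℝ → ℝ) : ℝ × ℝ → ℝ :=
  fun p => deriv (fun y => f (p.1, y)) p.2


lemma hasDerivAt_sliceX {f : ℝ × ℝ → ℝ} (hf : Differentiable ℝ f) (a b : ℝ) :
    HasDerivAt (fun x => f (x, b)) (fderiv ℝ f (a, b) (1, 0)) a := by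
  have h1 : HasFDerivAt (fun x : ℝ => (x, b)) ((ContinuousLinearMap.id ℝ ℝ).prod 0) a :=
    (hasFDerivAt_id a).prodMk (hasFDerivAt_const b a)
  have := ((hf (a, b)).hasFDerivAt.comp a h1).hasDerivAt
  simpa [Function.comp_def] using this

lemma hasDerivAt_sliceY {f : ℝ × ℝ → ℝ} (hf : Differentiable ℝ f) (a b : ℝ) :
    HasDerivAt (fun y => f (a, y)) (fderiv ℝ f (a, b) (0, 1)) b := by
  have h1 : HasFDerivAt (fun y : ℝ => (a, y)) ((0 : ℝ →L[ℝ] ℝ).prod (ContinuousLinearMap.id ℝ ℝ)) b :=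
    (hasFDerivAt_const a b).prodMk (hasFDerivAt_id b)
  have := ((hf (a, b)).hasFDerivAt.comp b h1).hasDerivAt
  simpa [Function.comp_def] using this

lemma pX_eq {f : ℝ × ℝ → ℝ} (hf : Differentiable ℝ f) :
    pX f = fun z => fderiv ℝ f z (1, 0) := by
  funext z
  exact (hasDerivAt_sliceX hf z.1 z.2).deriv

lemma pY_eq {f : ℝ × ℝ → ℝ} (hf : Differentiable ℝ f) :
    pY f = fun z => fderiv ℝ f z (0, 1) := by
  funext z
  exact (hasDerivAt_sliceY hf z.1 z.2).deriv

lemma contDiff_pX {f : ℝ × ℝ → ℝ} (hf : ContDiff ℝ (⊤ : ℕ∞) f) : ContDiff ℝ (⊤ : ℕ∞) (pX f) := by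
  rw [pX_eq (hf.differentiable (by simp))]
  exact (hf.fderiv_right le_rfl).clm_apply contDiff_const

lemma contDiff_pY {f : ℝ × ℝ → ℝ} (hf : ContDiff ℝ (⊤ : ℕ∞) f) : ContDiff ℝ (⊤ : ℕ∞) (pY f) := by
  rw [pY_eq (hf.differentiable (by simp))]
  exact (hf.fderiv_right le_rfl).clm_apply contDiff_const

lemma clairaut {f : ℝ × ℝ → ℝ} (hf : ContDiff ℝ (⊤ : ℕ∞) f) (z : ℝ × ℝ) :
    pX (pY f) z = pY (pX f) z := by
  have hdf : Differentiable ℝ f := hf.differentiable (by simp)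
  have hfd : ContDiff ℝ (⊤ : ℕ∞) (fderiv ℝ f) := hf.fderiv_right le_rfl
  have hfdd : Differentiable ℝ (fderiv ℝ f) := hfd.differentiable (by simp)
  have hsymm : IsSymmSndFDerivAt ℝ f z :=
    hf.contDiffAt.isSymmSndFDerivAt (by rw [minSmoothness_of_isRCLikeNormedField]; exact WithTop.coe_le_coe.mpr le_top)
  have e1 : pX (pY f) z = fderiv ℝ (pY f) z (1, 0) := by
    rw [pX_eq ((contDiff_pY hf).differentiable (by simp))]
  have e2 : pY (pX f) z = fderiv ℝ (pX f) z (0, 1) := by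
    rw [pY_eq ((contDiff_pX hf).differentiable (by simp))]
  rw [e1, e2, pY_eq hdf, pX_eq hdf]
  rw [fderiv_clm_apply (hfdd z) (differentiableAt_const _),
      fderiv_clm_apply (hfdd z) (differentiableAt_const _)]
  simp [hsymm (1, 0) (0, 1)]
lemma hasDerivAt_pX {f : ℝ × ℝ → ℝ} (hf : ContDiff ℝ (⊤ : ℕ∞) f) (a b : ℝ) :
    HasDerivAt (fun x => f (x, b)) (pX f (a, b)) a := by
  rw [pX_eq (hf.differentiable (by simp))]
  exact hasDerivAt_sliceX (hf.differentiable (by simp)) a b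

theorem stmt_16
    (h : ℝ) (hh : h ≠ 0)
    (w : ℤ → ℝ × ℝ → ℝ) (hw : ∀ n, ContDiff ℝ (⊤ : ℕ∞) (w n))
    (v u p q : ℤ → ℝ × ℝ → ℝ)
    (hv : ∀ n, v n = pX (w n)) (hu : ∀ n, u n = pX (v n))
    (hp : ∀ n, p n = pX (u n)) (hq : ∀ n, q n = pX (p n))
    (hlat : ∀ n z, u (n + 1) z + u n z
        = (2 / h) * (v (n + 1) z - v n z) - (1 / 2) * (v (n + 1) z - v n z) ^ 2)
    (hflow : ∀ n z, 4 * pY (v n) z + q n z + 3 * (u n z) ^ 2 = 0)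
    (Φ : ℤ → ℝ × ℝ → ℝ)
    (hΦ : ∀ n, Φ n = fun z => 4 * (pY (w (n + 1)) z - pY (w n) z)
        + (p (n + 1) z - p n z) + (3 / h) * (v (n + 1) z - v n z) ^ 2
        - (1 / 2) * (v (n + 1) z - v n z) ^ 3) :
    ∀ n z, pX (Φ n) z = 0 := by
  have hcv : ∀ k, ContDiff ℝ (⊤ : ℕ∞) (v k) := fun k => (hv k) ▸ contDiff_pX (hw k)
  have hcu : ∀ k, ContDiff ℝ (⊤ : ℕ∞) (u k) := fun k => (hu k) ▸ contDiff_pX (hcv k)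
  have hcp : ∀ k, ContDiff ℝ (⊤ : ℕ∞) (p k) := fun k => (hp k) ▸ contDiff_pX (hcu k)
  have hcPY : ∀ k, ContDiff ℝ (⊤ : ℕ∞) (pY (w k)) := fun k => contDiff_pY (hw k)
  intro n z
  obtain ⟨a, b⟩ := z
  -- derivatives of the slices
  have HY1 := hasDerivAt_pX (hcPY (n + 1)) a b
  have HY0 := hasDerivAt_pX (hcPY n) a b
  have HP1 := hasDerivAt_pX (hcp (n + 1)) a b
  have HP0 := hasDerivAt_pX (hcp n) a b
  have HV1 := hasDerivAt_pX (hcv (n + 1)) a b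
  have HV0 := hasDerivAt_pX (hcv n) a b
  set V : ℝ := v (n + 1) (a, b) - v n (a, b) with hV
  set DV : ℝ := pX (v (n + 1)) (a, b) - pX (v n) (a, b) with hDV
  have HVd : HasDerivAt (fun x => v (n + 1) (x, b) - v n (x, b)) DV a := HV1.sub HV0
  have HF : HasDerivAt (fun x => Φ n (x, b))
      (4 * (pX (pY (w (n + 1))) (a, b) - pX (pY (w n)) (a, b))
        + (pX (p (n + 1)) (a, b) - pX (p n) (a, b))
        + (3 / h) * (2 * V ^ 1 * DV) - (1 / 2) * (3 * V ^ 2 * DV)) a := by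
    rw [hΦ]
    exact ((((HY1.sub HY0).const_mul 4).add (HP1.sub HP0)).add
      ((HVd.pow 2).const_mul (3 / h))).sub ((HVd.pow 3).const_mul (1 / 2))
  have key : pX (Φ n) (a, b) = _ := HF.deriv
  rw [key]
  have hc1 : pX (pY (w (n + 1))) (a, b) = pY (v (n + 1)) (a, b) := by
    rw [clairaut (hw (n + 1)), ← hv]
  have hc0 : pX (pY (w n)) (a, b) = pY (v n) (a, b) := by
    rw [clairaut (hw n), ← hv]
  have hDVu : DV = u (n + 1) (a, b) - u n (a, b) := by rw [hDV, ← hu, ← hu]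
  have hq1 : pX (p (n + 1)) (a, b) = q (n + 1) (a, b) := by rw [← hq]
  have hq0 : pX (p n) (a, b) = q n (a, b) := by rw [← hq]
  rw [hc1, hc0, hDVu, hq1, hq0, hV]
  linear_combination hflow (n + 1) (a, b) - hflow n (a, b)
    - 3 * (u (n + 1) (a, b) - u n (a, b)) * hlat n (a, b)
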